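/- For any integer k with 0 ≤ k < n such that λ_{k+1} > 0 and R_k > n, the overfitting coefficient satisfies E_0 ≤ (1 − k/n)^{−2} · (1 − n/R_k)^{−1}. -/

import Mathlib

/-!
On the tail `μ = (λ_{k+1}, λ_{k+2}, …)` write `S = Σ L_i`, `T = Σ μ_i`, `P = Σ μ_i²` and
`D = Σ L_i (1 - L_i)`. Two Cauchy–Schwarz inequalities, `S² ≤ D · T / κ` (from `κ L² = L (1 - L) μ`)
and `T² ≤ S (P + κ T)` (from `μ² = L μ (μ + κ)`), eliminate `κ` and give `S - S² / R_k ≤ D`.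
Since the head modes contribute at most `k` to `Σ L_i = n` and nonnegatively to
`n - Σ L_i² = Σ L_i (1 - L_i)`, we have `n - k ≤ S ≤ n`, hence
`n - Σ L_i² ≥ D ≥ S - S² / R_k ≥ (n - k)² (1/n - 1/R_k)`, which rearranges to the bound on
`E_0 = n / (n - Σ L_i²)`.
-/

open Finset

section

variable {ι : Type*}

theorem sq_tsum_le_tsum_mul_tsum_of_sq_le_mul {r f g : ι → ℝ} (hr : ∀ i, 0 ≤ r i)
    (hf : ∀ i, 0 ≤ f i) (hg : ∀ i, 0 ≤ g i) (ht : ∀ i, r i ^ 2 ≤ f i * g i)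
    (hfs : Summable f) (hgs : Summable g) :
    (∑' i, r i) ^ 2 ≤ (∑' i, f i) * ∑' i, g i := by
  have hfg : 0 ≤ (∑' i, f i) * ∑' i, g i := mul_nonneg (tsum_nonneg hf) (tsum_nonneg hg)
  refine (Real.le_sqrt (tsum_nonneg hr) hfg).1 <| Real.tsum_le_of_sum_le hr fun s => ?_
  refine (Real.le_sqrt (sum_nonneg fun i _ => hr i) hfg).2 ?_
  calc (∑ i ∈ s, r i) ^ 2 ≤ (∑ i ∈ s, f i) * ∑ i ∈ s, g i :=
        sum_sq_le_sum_mul_sum_of_sq_le_mul s (fun i _ => hf i) (fun i _ => hg i) fun i _ => ht i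
    _ ≤ (∑' i, f i) * ∑' i, g i :=
        mul_le_mul (hfs.sum_le_tsum s fun i _ => hf i) (hgs.sum_le_tsum s fun i _ => hg i)
          (sum_nonneg fun i _ => hg i) (tsum_nonneg hf)

theorem Summable.sq_of_nonneg {μ : ι → ℝ} (hμ : ∀ i, 0 ≤ μ i) (hs : Summable μ) :
    Summable fun i => μ i ^ 2 :=
  (hs.mul_left (∑' i, μ i)).of_nonneg_of_le (fun i => sq_nonneg _) fun i => by
    rw [sq]
    exact mul_le_mul_of_nonneg_right (hs.le_tsum i fun j _ => hμ j) (hμ i)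

end

section Learnability

noncomputable def learnability (κ x : ℝ) : ℝ := x / (x + κ)

variable {κ x : ℝ}

theorem learnability_nonneg (hκ : 0 ≤ κ) (hx : 0 ≤ x) : 0 ≤ learnability κ x :=
  div_nonneg hx (by positivity)

theorem learnability_le_one (hκ : 0 ≤ κ) (hx : 0 ≤ x) : learnability κ x ≤ 1 :=
  div_le_one_of_le₀ (le_add_of_nonneg_right hκ) (by positivity)

theorem learnability_le_div (hκ : 0 < κ) (hx : 0 ≤ x) : learnability κ x ≤ x / κ :=
  div_le_div_of_nonneg_left hx hκ (le_add_of_nonneg_left hx)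

theorem learnability_sub_sq_nonneg (hκ : 0 ≤ κ) (hx : 0 ≤ x) :
    0 ≤ learnability κ x - learnability κ x ^ 2 := by
  nlinarith [learnability_nonneg hκ hx, learnability_le_one hκ hx]

theorem sq_learnability_eq (hκ : 0 < κ) (hx : 0 ≤ x) :
    learnability κ x ^ 2 = (learnability κ x - learnability κ x ^ 2) * (x / κ) := by
  have : x + κ ≠ 0 := by positivity
  unfold learnability
  field_simp
  ring

theorem sq_eq_learnability_mul (hκ : 0 < κ) (hx : 0 ≤ x) :
    x ^ 2 = learnability κ x * (x ^ 2 + κ * x) := by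
  have : x + κ ≠ 0 := by positivity
  unfold learnability
  field_simp

end Learnability

section Summation

variable {ι : Type*} {μ : ι → ℝ} {κ : ℝ}

theorem summable_learnability (hκ : 0 < κ) (hμ : ∀ i, 0 ≤ μ i) (hs : Summable μ) :
    Summable fun i => learnability κ (μ i) :=
  (hs.div_const κ).of_nonneg_of_le (fun i => learnability_nonneg hκ.le (hμ i))
    fun i => learnability_le_div hκ (hμ i)

theorem summable_learnability_sq (hκ : 0 < κ) (hμ : ∀ i, 0 ≤ μ i) (hs : Summable μ) :
    Summable fun i => learnability κ (μ i) ^ 2 :=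
  (summable_learnability hκ hμ hs).of_nonneg_of_le (fun i => sq_nonneg _) fun i => by
    nlinarith [learnability_sub_sq_nonneg hκ.le (hμ i)]

theorem tsum_learnability_sub_sq (hκ : 0 < κ) (hμ : ∀ i, 0 ≤ μ i) (hs : Summable μ) :
    ∑' i, (learnability κ (μ i) - learnability κ (μ i) ^ 2) =
      ∑' i, learnability κ (μ i) - ∑' i, learnability κ (μ i) ^ 2 :=
  (summable_learnability hκ hμ hs).tsum_sub (summable_learnability_sq hκ hμ hs)

noncomputable def effRank (μ : ι → ℝ) : ℝ := (∑' i, μ i) ^ 2 / ∑' i, μ i ^ 2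

theorem sub_sq_div_effRank_le_tsum_learnability_sub_sq (hκ : 0 < κ) (hμ : ∀ i, 0 ≤ μ i)
    (hs : Summable μ) (hT : 0 < ∑' i, μ i) :
    ∑' i, learnability κ (μ i) - (∑' i, learnability κ (μ i)) ^ 2 / effRank μ ≤
      ∑' i, (learnability κ (μ i) - learnability κ (μ i) ^ 2) := by
  set S := ∑' i, learnability κ (μ i)
  set T := ∑' i, μ i
  set P := ∑' i, μ i ^ 2
  set D := ∑' i, (learnability κ (μ i) - learnability κ (μ i) ^ 2)
  have hL := summable_learnability hκ hμ hs
  have hS : 0 ≤ S := tsum_nonneg fun i => learnability_nonneg hκ.le (hμ i)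
  have hκST : κ * S ^ 2 ≤ D * T := by
    have := sq_tsum_le_tsum_mul_tsum_of_sq_le_mul (fun i => learnability_nonneg hκ.le (hμ i))
      (fun i => learnability_sub_sq_nonneg hκ.le (hμ i)) (fun i => div_nonneg (hμ i) hκ.le)
      (fun i => (sq_learnability_eq hκ (hμ i)).le) (hL.sub (summable_learnability_sq hκ hμ hs))
      (hs.div_const κ)
    rw [tsum_div_const, mul_div_assoc', le_div_iff₀ hκ] at this
    linarith
  have hTS : T ^ 2 ≤ S * (P + κ * T) := by
    have := sq_tsum_le_tsum_mul_tsum_of_sq_le_mul hμ (fun i => learnability_nonneg hκ.le (hμ i))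
      (fun i => by have := hμ i; positivity) (fun i => (sq_eq_learnability_mul hκ (hμ i)).le) hL
      ((hs.sq_of_nonneg hμ).add (hs.mul_left κ))
    rwa [(hs.sq_of_nonneg hμ).tsum_add (hs.mul_left κ), tsum_mul_left] at this
  have key : S * T ^ 2 ≤ D * T ^ 2 + S ^ 2 * P := by
    nlinarith [mul_le_mul_of_nonneg_left hTS hS, mul_le_mul_of_nonneg_left hκST hT.le]
  rw [effRank, div_div_eq_mul_div, sub_le_iff_le_add, add_div' _ _ _ (by positivity),
    le_div_iff₀ (by positivity)]
  linarith

end Summation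

theorem tsum_le_add_tsum_nat_add {f : ℕ → ℝ} (hf : Summable f) (h1 : ∀ i, f i ≤ 1) (k : ℕ) :
    ∑' i, f i ≤ k + ∑' i, f (k + i) := by
  rw [← hf.sum_add_tsum_nat_add k]
  simp only [add_comm _ k]
  gcongr
  exact (sum_le_sum fun i _ => h1 i).trans (by simp)

theorem tsum_nat_add_le_tsum {f : ℕ → ℝ} (hf : Summable f) (h0 : ∀ i, 0 ≤ f i) (k : ℕ) :
    ∑' i, f (k + i) ≤ ∑' i, f i :=
  tsum_comp_le_tsum_of_inj hf h0 (add_right_injective k)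

theorem sq_mul_inv_sub_inv_le_sub_sq_div {m s n R : ℝ} (hm : 0 ≤ m) (hms : m ≤ s) (hsn : s ≤ n)
    (hn : 0 < n) (hnR : n ≤ R) : m ^ 2 * (n⁻¹ - R⁻¹) ≤ s - s ^ 2 / R := by
  have hR : 0 < R := hn.trans_le hnR
  have key : m ^ 2 * (R - n) ≤ n * s * (R - s) := by
    nlinarith [mul_le_mul hms hms hm (hm.trans hms),
      mul_nonneg (mul_nonneg (hm.trans hms) (sub_nonneg.2 hsn)) (sub_nonneg.2 (hsn.trans hnR))]
  calc m ^ 2 * (n⁻¹ - R⁻¹) = m ^ 2 * (R - n) / (n * R) := by field_simp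
    _ ≤ n * s * (R - s) / (n * R) := by gcongr
    _ = s - s ^ 2 / R := by field_simp

theorem e0_upper_bound_benign_general
    (n : ℕ)
    (lam : ℕ → ℝ) (hlam_nonneg : ∀ i, 0 ≤ lam i)
    (hlam_summable : Summable lam)
    (κ0 : ℝ) (hκ0 : 0 < κ0)
    (hκ0_eq : ∑' i, lam i / (lam i + κ0) = (n : ℝ))
    (E0 : ℝ)
    (hE0 : E0 = (n : ℝ) / ((n : ℝ) - ∑' i, (lam i / (lam i + κ0)) ^ 2))
    (k : ℕ) (hk : k < n) (hlamk : 0 < lam k)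
    (Rk : ℝ) (hRk : Rk = (∑' i, lam (k + i)) ^ 2 / ∑' i, lam (k + i) ^ 2)
    (hRkn : (n : ℝ) < Rk) :
    E0 ≤ ((1 - (k : ℝ) / n) ^ 2)⁻¹ * (1 - (n : ℝ) / Rk)⁻¹ := by
  change ∑' i, learnability κ0 (lam i) = n at hκ0_eq
  change E0 = n / (n - ∑' i, learnability κ0 (lam i) ^ 2) at hE0
  change Rk = effRank (fun i => lam (k + i)) at hRk
  have hn : (0 : ℝ) < n := by exact_mod_cast k.zero_le.trans_lt hk
  have hkn : (k : ℝ) < n := by exact_mod_cast hk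
  have hL := summable_learnability hκ0 hlam_nonneg hlam_summable
  have hS_le : ∑' i, learnability κ0 (lam (k + i)) ≤ n :=
    hκ0_eq ▸ tsum_nat_add_le_tsum hL (fun i => learnability_nonneg hκ0.le (hlam_nonneg i)) k
  have hS_ge : n - k ≤ ∑' i, learnability κ0 (lam (k + i)) := by
    linarith [tsum_le_add_tsum_nat_add hL (fun i => learnability_le_one hκ0.le (hlam_nonneg i)) k]
  have hD : ∑' i, (learnability κ0 (lam (k + i)) - learnability κ0 (lam (k + i)) ^ 2) ≤
      n - ∑' i, learnability κ0 (lam i) ^ 2 := by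
    rw [← hκ0_eq, ← tsum_learnability_sub_sq hκ0 hlam_nonneg hlam_summable]
    exact tsum_nat_add_le_tsum (hL.sub (summable_learnability_sq hκ0 hlam_nonneg hlam_summable))
      (fun i => learnability_sub_sq_nonneg hκ0.le (hlam_nonneg i)) k
  have hμ : Summable fun i => lam (k + i) := hlam_summable.comp_injective (add_right_injective k)
  have htail := sub_sq_div_effRank_le_tsum_learnability_sub_sq hκ0 (fun i => hlam_nonneg (k + i))
    hμ (hμ.tsum_pos (fun i => hlam_nonneg _) 0 (by simpa using hlamk))
  have hc : 0 < (n - k : ℝ) ^ 2 * ((n : ℝ)⁻¹ - Rk⁻¹) :=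
    mul_pos (pow_pos (sub_pos.2 hkn) 2) (sub_pos.2 (inv_strictAnti₀ hn hRkn))
  calc E0 ≤ n / ((n - k : ℝ) ^ 2 * ((n : ℝ)⁻¹ - Rk⁻¹)) := by
        rw [hE0]
        refine div_le_div_of_nonneg_left hn.le hc ?_
        rw [← hRk] at htail
        linarith [sq_mul_inv_sub_inv_le_sub_sq_div (sub_nonneg.2 hkn.le) hS_ge hS_le hn hRkn.le]
    _ = ((1 - (k : ℝ) / n) ^ 2)⁻¹ * (1 - (n : ℝ) / Rk)⁻¹ := by
        have hnk : (n - k : ℝ) ≠ 0 := by linarith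
        have hRn : Rk - n ≠ 0 := by linarith
        field_simp

/-- For any `k < n` with `λ_{k+1} > 0` and `R_k > n`,
`E_0 ≤ (1 − k/n)⁻² · (1 − n/R_k)⁻¹`.
(Here `lam i` denotes `λ_{i+1}`, so `∑' i, lam (k+i) = Σ_{i>k} λ_i` and
`lam k = λ_{k+1}`.) -/
theorem e0_upper_bound_benign
    (n : ℕ) (hn : 1 ≤ n)
    (lam : ℕ → ℝ) (hlam_nonneg : ∀ i, 0 ≤ lam i) (hlam_mono : Antitone lam)
    (hlam_summable : Summable lam) (hlam_ne : ∃ i, lam i ≠ 0)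
    (κ0 : ℝ) (hκ0 : 0 < κ0)
    (hκ0_eq : ∑' i, lam i / (lam i + κ0) = (n : ℝ))
    (E0 : ℝ)
    (hE0 : E0 = (n : ℝ) / ((n : ℝ) - ∑' i, (lam i / (lam i + κ0)) ^ 2))
    (k : ℕ) (hk : k < n) (hlamk : 0 < lam k)
    (Rk : ℝ) (hRk : Rk = (∑' i, lam (k + i)) ^ 2 / ∑' i, lam (k + i) ^ 2)
    (hRkn : (n : ℝ) < Rk) :
    E0 ≤ ((1 - (k : ℝ) / n) ^ 2)⁻¹ * (1 - (n : ℝ) / Rk)⁻¹ :=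
  e0_upper_bound_benign_general n lam hlam_nonneg hlam_summable κ0 hκ0 hκ0_eq E0 hE0 k hk hlamk Rk
    hRk hRkn
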